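/- The determinant of the n×n tridiagonal matrix with corners — with diagonal entries a_1,…,a_n, superdiagonal entries b_1,…,b_{n-1}, subdiagonal entries c_1,…,c_{n-1}, entry c_0 in position (1,n) and entry b_n in position (n,1) — equals (-1)^{n+1}(b_n ⋯ b_1 + c_{n-1} ⋯ c_0) + tr( [[a_n, -b_{n-1}c_{n-1}],[1,0]] ⋯ [[a_2, -b_1c_1],[1,0]] · [[a_1, -b_n c_0],[1,0]] ). -/

import Mathlib

open Matrix

/-- The `n × n` tridiagonal matrix with corners: diagonal entries `a_1, …, a_n`,
superdiagonal entries `b_1, …, b_{n-1}`, subdiagonal entries `c_1, …, c_{n-1}`,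
entry `c_0` in position `(1, n)` and entry `b_n` in position `(n, 1)`
(`0`-based index `i : Fin n` codes the paper's index `i+1`). -/
def tridiagCorner (n : ℕ) (a b c : ℕ → ℂ) : Matrix (Fin n) (Fin n) ℂ :=
  fun i j =>
    (if (i : ℕ) = j then a (i + 1) else 0) +
    (if (j : ℕ) = i + 1 then b (i + 1) else 0) +
    (if (i : ℕ) = j + 1 then c i else 0) +
    (if (i : ℕ) = 0 ∧ (j : ℕ) = n - 1 then c 0 else 0) +
    (if (i : ℕ) = n - 1 ∧ (j : ℕ) = 0 then b n else 0)

/-- The partial products of the `2 × 2` transfer matrices for the corner case: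
rightmost factor `[[a_1, -b_n c_0], [1, 0]]`, then `[[a_k, -b_{k-1} c_{k-1}], [1, 0]]`
for `k = 2, …` with index decreasing from left to right. -/
noncomputable def cornerProd (n : ℕ) (a b c : ℕ → ℂ) : ℕ → Matrix (Fin 2) (Fin 2) ℂ
  | 0 => 1
  | 1 => !![a 1, -(b n * c 0); 1, 0]
  | k + 2 => !![a (k + 2), -(b (k + 1) * c (k + 1)); 1, 0] * cornerProd n a b c (k + 1)

/-! The corner entries `c₀` (row `1`) and `bₙ` (row `n`) enter the determinant linearly in their
rows, so it splits into four determinants: the plain tridiagonal one, which is the continuant `Kₙ`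
of the three-term recurrence; two in which a corner row leaves a triangular minor, giving
`(-1)^{n+1} c_{n-1} ⋯ c_0` and `(-1)^{n+1} bₙ ⋯ b₁`; and one with both corners, equal to `-bₙc₀`
times the continuant `K'_{n-2}` of the inner block (rows and columns `2, …, n-1`). The product of
the transfer matrices has continuants as entries, and its trace is exactly `Kₙ - bₙc₀ K'_{n-2}`. -/

theorem Finset.prod_Icc_one_eq_prod_range {M : Type*} [CommMonoid M] (f : ℕ → M) (k : ℕ) :
    ∏ i ∈ Finset.Icc 1 k, f i = ∏ i ∈ Finset.range k, f (i + 1) := by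
  rw [Finset.range_eq_Ico, Finset.prod_Ico_add', zero_add, Finset.Ico_add_one_right_eq_Icc]

namespace Matrix

variable {R : Type*} [CommRing R]

theorem det_eq_of_row_eq_single {k : ℕ} (A : Matrix (Fin (k + 1)) (Fin (k + 1)) R)
    {i j : Fin (k + 1)} {x : R} (h : A i = Pi.single j x) :
    A.det = (-1) ^ (i + j : ℕ) * x * (A.submatrix i.succAbove j.succAbove).det := by
  rw [det_succ_row A i, Fintype.sum_eq_single j fun j' hj' => by simp [h, hj']]
  simp [h]

theorem det_eq_of_col_eq_single {k : ℕ} (A : Matrix (Fin (k + 1)) (Fin (k + 1)) R)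
    {i j : Fin (k + 1)} {x : R} (h : (fun i' => A i' j) = Pi.single i x) :
    A.det = (-1) ^ (i + j : ℕ) * x * (A.submatrix i.succAbove j.succAbove).det := by
  rw [← det_transpose, det_eq_of_row_eq_single Aᵀ h, ← transpose_submatrix, det_transpose,
    add_comm (j : ℕ)]

theorem add_single_eq_updateRow {m n α : Type*} [DecidableEq m] [DecidableEq n] [AddZeroClass α]
    (A : Matrix m n α) (i : m) (j : n) (x : α) :
    A + single i j x = A.updateRow i (A i + Pi.single j x) := by
  ext r s
  simp only [add_apply, single_apply, updateRow_apply, Pi.add_apply, Pi.single_apply]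
  split_ifs <;> simp_all

theorem det_add_single_add_single {n : Type*} [Fintype n] [DecidableEq n]
    (A : Matrix n n R) {i j : n} (hij : i ≠ j) (i' j' : n) (x y : R) :
    (A + single i i' x + single j j' y).det =
      A.det + (A.updateRow i (Pi.single i' x)).det + (A.updateRow j (Pi.single j' y)).det +
        ((A.updateRow i (Pi.single i' x)).updateRow j (Pi.single j' y)).det := by
  have hAi : A i = (A.updateRow j (Pi.single j' y)) i := (updateRow_ne hij).symm
  rw [add_single_eq_updateRow, add_single_eq_updateRow, det_updateRow_add, updateRow_eq_self,
    det_updateRow_add, updateRow_eq_self, updateRow_comm _ hij, hAi, det_updateRow_add,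
    updateRow_eq_self, updateRow_comm _ hij.symm]
  ring

end Matrix

section Tridiagonal

variable {R : Type*} [CommRing R]

def tridiag (k : ℕ) (a b c : ℕ → R) : Matrix (Fin k) (Fin k) R :=
  of fun i j =>
    (if (i : ℕ) = j then a (i + 1) else 0) +
    (if (j : ℕ) = i + 1 then b (i + 1) else 0) +
    (if (i : ℕ) = j + 1 then c i else 0)

def continuant (a b c : ℕ → R) : ℕ → R
  | 0 => 1
  | 1 => a 1
  | k + 2 => a (k + 2) * continuant a b c (k + 1) - b (k + 1) * c (k + 1) * continuant a b c k

variable (a b c : ℕ → R)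

theorem tridiag_apply_eq_zero {k : ℕ} {i j : Fin k}
    (h : (i : ℕ) + 1 < j ∨ (j : ℕ) + 1 < i) : tridiag k a b c i j = 0 := by
  simp only [tridiag, of_apply]
  split_ifs <;> first | omega | simp

theorem tridiag_submatrix_castSucc (k : ℕ) :
    (tridiag (k + 1) a b c).submatrix Fin.castSucc Fin.castSucc = tridiag k a b c := rfl

theorem det_tridiag_submatrix_succ_castSucc (k : ℕ) :
    ((tridiag (k + 1) a b c).submatrix Fin.succ Fin.castSucc).det =
      ∏ i ∈ Finset.range k, c (i + 1) := by
  rw [det_of_isUpperTriangular, ← Fin.prod_univ_eq_prod_range]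
  · simp [tridiag, add_assoc]
  · intro i j (hij : j < i)
    exact tridiag_apply_eq_zero a b c (Or.inr (by simpa using Fin.lt_def.mp hij))

theorem det_tridiag_submatrix_castSucc_succ (k : ℕ) :
    ((tridiag (k + 1) a b c).submatrix Fin.castSucc Fin.succ).det =
      ∏ i ∈ Finset.range k, b (i + 1) := by
  rw [det_of_isLowerTriangular _, ← Fin.prod_univ_eq_prod_range]
  · simp [tridiag, add_assoc]
  · intro i j (hij : i < j)
    exact tridiag_apply_eq_zero a b c (Or.inl (by simpa using Fin.lt_def.mp hij))

theorem det_tridiag (k : ℕ) : (tridiag k a b c).det = continuant a b c k := by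
  induction k using Nat.twoStepInduction with
  | zero => simp [continuant]
  | one => simp [tridiag, continuant]
  | more k ih₁ ih₂ =>
    set S := (tridiag (k + 2) a b c).submatrix Fin.castSucc (Fin.last k).castSucc.succAbove
    have hS : S.det = b (k + 1) * continuant a b c k := by
      have hcol : (fun i => S i (Fin.last k)) = Pi.single (Fin.last k) (b (k + 1)) := by
        ext i
        have hi := i.isLt
        simp only [S, tridiag, submatrix_apply, of_apply, Pi.single_apply, Fin.ext_iff,
          Fin.succAbove_castSucc_self, Fin.val_succ, Fin.val_castSucc, Fin.val_last]
        split_ifs <;> first | omega | simp_all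
      have hminor : S.submatrix Fin.castSucc Fin.castSucc = tridiag k a b c := by
        ext i j
        simp [S, tridiag]
      rw [det_eq_of_col_eq_single S hcol, Fin.succAbove_last, hminor, ih₁, Fin.val_last,
        Even.neg_one_pow ⟨k, rfl⟩, one_mul]
    rw [det_succ_row _ (Fin.last _), Fin.sum_univ_castSucc, Fin.sum_univ_castSucc,
      Finset.sum_eq_zero fun j _ => ?_]
    · have ha : tridiag (k + 2) a b c (Fin.last _) (Fin.last _) = a (k + 2) := by simp [tridiag]
      have hc : tridiag (k + 2) a b c (Fin.last _) (Fin.last k).castSucc = c (k + 1) := by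
        simp [tridiag, add_assoc]
      rw [Fin.succAbove_last, tridiag_submatrix_castSucc, ih₂, hS, ha, hc, continuant]
      simp only [Fin.val_castSucc, Fin.val_last]
      rw [Even.neg_one_pow ⟨k + 1, rfl⟩, Odd.neg_one_pow ⟨k, by ring⟩]
      ring
    · have hj : (j.castSucc.castSucc : ℕ) + 1 < Fin.last (k + 1) := by simp
      rw [tridiag_apply_eq_zero a b c (Or.inr hj)]
      simp

end Tridiagonal

section CornerMinors

variable {R : Type*} [CommRing R] (a b c : ℕ → R) (m : ℕ)

theorem det_tridiag_updateRow_zero_single_last (x : R) :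
    ((tridiag (m + 2) a b c).updateRow 0 (Pi.single (Fin.last _) x)).det =
      (-1) ^ (m + 1) * x * ∏ i ∈ Finset.range (m + 1), c (i + 1) := by
  rw [det_eq_of_row_eq_single _ (updateRow_self (i := 0)), submatrix_updateRow_succAbove,
    Fin.succAbove_zero, Fin.succAbove_last, det_tridiag_submatrix_succ_castSucc]
  simp

theorem det_tridiag_updateRow_last_single_zero (y : R) :
    ((tridiag (m + 2) a b c).updateRow (Fin.last _) (Pi.single 0 y)).det =
      (-1) ^ (m + 1) * y * ∏ i ∈ Finset.range (m + 1), b (i + 1) := by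
  rw [det_eq_of_row_eq_single _ (updateRow_self (i := Fin.last _)), submatrix_updateRow_succAbove,
    Fin.succAbove_zero, Fin.succAbove_last, det_tridiag_submatrix_castSucc_succ]
  simp

theorem det_tridiag_updateRow_corners (x y : R) :
    (((tridiag (m + 2) a b c).updateRow 0 (Pi.single (Fin.last _) x)).updateRow (Fin.last _)
        (Pi.single 0 y)).det =
      -(x * y) * continuant (fun i => a (i + 1)) (fun i => b (i + 1)) (fun i => c (i + 1)) m := by
  set B := ((tridiag (m + 2) a b c).updateRow 0 (Pi.single (Fin.last _) x)).submatrix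
    Fin.castSucc Fin.succ
  have hB : B 0 = Pi.single (Fin.last m) x := by
    ext j
    simp [B, Pi.single_apply]
  have hminor : B.submatrix Fin.succ Fin.castSucc =
      tridiag m (fun i => a (i + 1)) (fun i => b (i + 1)) (fun i => c (i + 1)) := by
    ext i j
    simp [B, tridiag]
  rw [det_eq_of_row_eq_single _ (updateRow_self (i := Fin.last _)), submatrix_updateRow_succAbove,
    Fin.succAbove_zero, Fin.succAbove_last, det_eq_of_row_eq_single B hB, Fin.succAbove_zero,
    Fin.succAbove_last, hminor, det_tridiag]
  have hsign : ((-1 : R) ^ (m + 1) * (-1) ^ m) = -1 := by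
    rw [pow_succ, mul_right_comm, ← pow_add, Even.neg_one_pow ⟨m, rfl⟩, one_mul]
  simp only [Fin.val_last, Fin.val_zero, add_zero, zero_add]
  linear_combination (x * y * continuant _ _ _ m) * hsign

end CornerMinors

section TridiagCorner

variable (n : ℕ) (a b c : ℕ → ℂ)

theorem cornerProd_add_two (k : ℕ) :
    cornerProd n a b c (k + 2) =
      !![continuant a b c (k + 2),
          -(b n * c 0) * continuant (fun i => a (i + 1)) (fun i => b (i + 1)) (fun i => c (i + 1))
            (k + 1);
        continuant a b c (k + 1),
          -(b n * c 0) * continuant (fun i => a (i + 1)) (fun i => b (i + 1)) (fun i => c (i + 1))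
            k] := by
  induction k with
  | zero =>
    rw [cornerProd, cornerProd, mul_fin_two]
    simp only [continuant]
    ring_nf
  | succ k ih =>
    rw [cornerProd, ih, mul_fin_two]
    simp only [continuant]
    ring_nf

theorem trace_cornerProd (m : ℕ) :
    (cornerProd (m + 2) a b c (m + 2)).trace =
      continuant a b c (m + 2) - b (m + 2) * c 0 *
        continuant (fun i => a (i + 1)) (fun i => b (i + 1)) (fun i => c (i + 1)) m := by
  rw [cornerProd_add_two, trace_fin_two_of]
  ring

theorem tridiagCorner_eq (m : ℕ) :
    tridiagCorner (m + 2) a b c =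
      tridiag (m + 2) a b c + single 0 (Fin.last _) (c 0) +
        single (Fin.last _) 0 (b (m + 2)) := by
  ext i j
  simp only [tridiagCorner, tridiag, single_apply, Matrix.add_apply, of_apply, Fin.ext_iff,
    Fin.val_zero, Fin.val_last, @eq_comm ℕ 0, @eq_comm ℕ (m + 1), show m + 2 - 1 = m + 1 from rfl]

end TridiagCorner

theorem det_tridiagCorner_general (n : ℕ) (hn : 2 ≤ n) (a b c : ℕ → ℂ) :
    (tridiagCorner n a b c).det =
      (-1 : ℂ) ^ (n + 1) *
          ((∏ i ∈ Finset.Icc 1 n, b i) + ∏ i ∈ Finset.range n, c i) +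
        (cornerProd n a b c n).trace := by
  obtain ⟨m, rfl⟩ : ∃ m, n = m + 2 := ⟨n - 2, by omega⟩
  rw [tridiagCorner_eq, det_add_single_add_single _ Fin.last_pos.ne, det_tridiag,
    det_tridiag_updateRow_zero_single_last, det_tridiag_updateRow_last_single_zero,
    det_tridiag_updateRow_corners, trace_cornerProd, Finset.prod_Icc_one_eq_prod_range,
    Finset.prod_range_succ (fun i => b (i + 1)) (m + 1), Finset.prod_range_succ' c]
  ring

/-- Formula (1) of the paper: the determinant of a tridiagonal matrix with corners
equals `(-1)^{n+1} (b_n ⋯ b_1 + c_{n-1} ⋯ c_0)` plus the trace of the product of the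
associated `2 × 2` transfer matrices. -/
theorem det_tridiagCorner (n : ℕ) (hn : 2 ≤ n) (a b c : ℕ → ℂ)
    (hb : ∀ i, 1 ≤ i → i ≤ n → b i ≠ 0)
    (hc : ∀ i, i < n → c i ≠ 0) :
    (tridiagCorner n a b c).det =
      (-1 : ℂ) ^ (n + 1) *
          ((∏ i ∈ Finset.Icc 1 n, b i) + ∏ i ∈ Finset.range n, c i) +
        (cornerProd n a b c n).trace :=
  det_tridiagCorner_general n hn a b c
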